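/- Let T be a directed tree, λ = {λ_v}_{v∈V°} a system of complex numbers, {ε_v}_{v∈V} a system of nonnegative reals, and {μ_v}_{v∈V} a system of Borel probability measures on [0,∞) satisfying, for every u ∈ V and Borel σ ⊆ [0,∞), μ_u(σ) = ∑_{v∈Chi(u)} |λ_v|² ∫_σ (1/s) dμ_v(s) + ε_u δ₀(σ). Let S_λ be the weighted shift on T with weights λ. Then: (i) for all u ∈ V and n ≥ 1, ∫_{[0,∞)} s^n dμ_u(s) = ∑_{v∈Chi^n(u)} |λ_{u|v}|²; (ii) if Chi^n(u) = ∅ for some u ∈ V and n ≥ 1, then μ_v = δ₀ for all v ∈ Des(u); (iii) the linear span of {e_u : u ∈ V} is contained in D^∞(S_λ) if and only if ∫_{[0,∞)} s^n dμ_u(s) < ∞ for all n ∈ ℤ₊ and u ∈ V; (iv) if the linear span of {e_u : u ∈ V} is contained in D^∞(S_λ), then ‖S_λ^n e_u‖² = ∫_{[0,∞)} s^n dμ_u(s) for all u ∈ V and n ∈ ℤ₊. -/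

import Mathlib

/-!
Integrating `s ↦ s ^ (n + 1)` against the consistency condition gives the moment recursion
`∫ s^(n+1) dμ_u = ∑_{w ∈ Chi(u)} |λ_w|² ∫ s^n dμ_w`: the density `1/s` cancels one factor `s`
because `μ_w {0} = 0` whenever `λ_w ≠ 0`, as otherwise `1/0 = ∞` would make `μ_u {0}` infinite.
The path sums `∑_{v ∈ Chi^n(u)} |λ_{u|v}|²` satisfy the same recursion with the same value `1`
at `n = 0`, which gives (i). For (ii), `Chi^n(u) = ∅` forces `Chi^n(v) = ∅` for every descendant
`v`, and a probability measure on `[0, ∞)` with a vanishing moment of positive order is `δ₀`.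
On the operator side, `Λ_T^n e_u` is the function `v ↦ λ_{u|v}` on `Chi^n(u)`, whose squared
`ℓ²`-norm is the path sum, and `e_u ∈ D(S_λ^n)` exactly when `Λ_T^k e_u ∈ ℓ²` for `k ≤ n`;
this gives (iii) and (iv).
-/

open MeasureTheory ENNReal
open scoped NNReal
noncomputable section

/-- `μ` is a representing measure of the sequence `t`. -/
def IsRepMeasure (μ : Measure ℝ≥0) (t : ℕ → ℝ) : Prop :=
  ∀ n : ℕ, Integrable (fun s : ℝ≥0 => (s : ℝ) ^ n) μ ∧ t n = ∫ s, (s : ℝ) ^ n ∂μ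

/-- `t` is a Stieltjes moment sequence. -/
def IsStieltjesMoment (t : ℕ → ℝ) : Prop := ∃ μ : Measure ℝ≥0, IsRepMeasure μ t

/-- `t` is a determinate Stieltjes moment sequence. -/
def IsDetStieltjesMoment (t : ℕ → ℝ) : Prop := ∃! μ : Measure ℝ≥0, IsRepMeasure μ t

section Operators

universe u
variable {H : Type u} [NormedAddCommGroup H] [InnerProductSpace ℂ H]

/-- The maximal domain of the composition `S ∘ T`. -/
def compDomain (S T : H →ₗ.[ℂ] H) : Submodule ℂ H where
  carrier := {x | ∃ hx : x ∈ T.domain, T ⟨x, hx⟩ ∈ S.domain}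
  zero_mem' := ⟨T.domain.zero_mem, by
    have h0 : (⟨0, T.domain.zero_mem⟩ : T.domain) = 0 := rfl
    rw [h0, LinearPMap.map_zero]; exact S.domain.zero_mem⟩
  add_mem' := by
    rintro x y ⟨hx, hx'⟩ ⟨hy, hy'⟩
    refine ⟨T.domain.add_mem hx hy, ?_⟩
    have : (⟨x + y, T.domain.add_mem hx hy⟩ : T.domain) = ⟨x, hx⟩ + ⟨y, hy⟩ := rfl
    rw [this, LinearPMap.map_add]
    exact S.domain.add_mem hx' hy'
  smul_mem' := by
    rintro c x ⟨hx, hx'⟩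
    refine ⟨T.domain.smul_mem c hx, ?_⟩
    have : (⟨c • x, T.domain.smul_mem c hx⟩ : T.domain) = c • (⟨x, hx⟩ : T.domain) := rfl
    rw [this, LinearPMap.map_smul]
    exact S.domain.smul_mem c hx'

/-- Composition `S ∘ T` of partial operators, on the maximal domain. -/
def pmapComp (S T : H →ₗ.[ℂ] H) : H →ₗ.[ℂ] H :=
  S.comp (T.domRestrict (compDomain S T)) (by
    rintro ⟨x, hx⟩
    have hxT : x ∈ T.domain := (Submodule.mem_inf.mp hx).2
    have hxD : x ∈ compDomain S T := (Submodule.mem_inf.mp hx).1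
    exact hxD.choose_spec)

/-- Powers of a partial operator: `pmapPow S n = Sⁿ` with its natural domain. -/
def pmapPow (S : H →ₗ.[ℂ] H) : ℕ → (H →ₗ.[ℂ] H)
  | 0 => LinearMap.id.toPMap ⊤
  | n + 1 => pmapComp (pmapPow S n) S

open Classical in
/-- Total (junk-valued) application of the power `Sⁿ`. -/
def powApp (S : H →ₗ.[ℂ] H) (n : ℕ) (x : H) : H :=
  if h : x ∈ (pmapPow S n).domain then (pmapPow S n) ⟨x, h⟩ else 0

/-- The set of `C^∞`-vectors of `S`. -/
def Dinf (S : H →ₗ.[ℂ] H) : Set H := {x | ∀ n : ℕ, x ∈ (pmapPow S n).domain}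

/-- `F` is a core of `S`. -/
def IsCore (S : H →ₗ.[ℂ] H) (F : Submodule ℂ H) : Prop :=
  F ≤ S.domain ∧ (S.graph : Set (H × H)) ⊆ closure ((S.domRestrict F).graph : Set (H × H))

end Operators
section Operators
universe u
variable {H : Type u} [NormedAddCommGroup H] [InnerProductSpace ℂ H]

/-- A normal (unbounded) operator: closed, densely defined, with `D(N*) = D(N)` and
`‖N* x‖ = ‖N x‖` on the common domain. -/
def IsNormalOp [CompleteSpace H] (N : H →ₗ.[ℂ] H) : Prop :=
  Dense (N.domain : Set H) ∧ N.IsClosed ∧ N.adjoint.domain = N.domain ∧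
    ∀ (x : H) (hx : x ∈ N.domain) (hx' : x ∈ N.adjoint.domain),
      ‖N.adjoint ⟨x, hx'⟩‖ = ‖N ⟨x, hx⟩‖

/-- A subnormal operator: densely defined with a normal extension in a possibly
larger Hilbert space. -/
def IsSubnormal {H : Type u} [NormedAddCommGroup H] [InnerProductSpace ℂ H]
    (S : H →ₗ.[ℂ] H) : Prop :=
  Dense (S.domain : Set H) ∧
  ∃ (K : Type u) (_ : NormedAddCommGroup K) (_ : InnerProductSpace ℂ K) (_ : CompleteSpace K)
    (J : H →ₗᵢ[ℂ] K) (N : K →ₗ.[ℂ] K), IsNormalOp N ∧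
      ∀ x : S.domain, ∃ hx : J x ∈ N.domain, N ⟨J x, hx⟩ = J (S x)

/-- A hyponormal operator. -/
def IsHyponormal [CompleteSpace H] (S : H →ₗ.[ℂ] H) : Prop :=
  Dense (S.domain : Set H) ∧
  ∀ (x : H) (hx : x ∈ S.domain), ∃ hx' : x ∈ S.adjoint.domain,
      ‖S.adjoint ⟨x, hx'⟩‖ ≤ ‖S ⟨x, hx⟩‖

end Operators

/-- A directed tree on the vertex set `V`: a connected directed graph without circuits
in which every non-root vertex has a unique parent. -/
structure DirectedTree (V : Type*) where
  edge : V → V → Prop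
  connected : ∀ u v : V, Relation.ReflTransGen (fun a b => edge a b ∨ edge b a) u v
  no_circuits : ∀ v : V, ¬ Relation.TransGen edge v v
  parent_unique : ∀ u v w : V, edge v u → edge w u → v = w

namespace DirectedTree

variable {V : Type*}

/-- The roots: vertices with no incoming edge. -/
def isRoot (T : DirectedTree V) (v : V) : Prop := ¬ ∃ u : V, T.edge u v

/-- `V°`: the non-root vertices, i.e. vertices having a parent. -/
def nonRoot (T : DirectedTree V) (v : V) : Prop := ∃ u : V, T.edge u v

open Classical in
/-- The parent function (with junk value at roots). -/
def par (T : DirectedTree V) (v : V) : V := if h : ∃ u : V, T.edge u v then h.choose else v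

/-- The set of children of a vertex. -/
def chi (T : DirectedTree V) (u : V) : Set V := {v | T.edge u v}

/-- Iterated children `Chi^n(u)`. -/
def chiN (T : DirectedTree V) : ℕ → V → Set V
  | 0, u => {u}
  | n + 1, u => ⋃ w ∈ T.chiN n u, T.chi w

/-- The descendants of `u`. -/
def des (T : DirectedTree V) (u : V) : Set V := ⋃ n : ℕ, T.chiN n u

/-- `T` is leafless: every vertex has a child. -/
def Leafless (T : DirectedTree V) : Prop := ∀ u : V, ∃ v : V, T.edge u v

/-- The product `λ_{u∣v} = ∏_{j=0}^{n-1} λ_{par^j(v)}` of the weights along the path of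
length `n` ending at `v` (for `v ∈ Chi^n(u)` this is the usual `λ_{u∣v}`). -/
def pathProd (T : DirectedTree V) (lam : V → ℂ) (n : ℕ) (v : V) : ℂ :=
  ∏ j ∈ Finset.range n, lam (T.par^[j] v)

open Classical in
/-- The formal weighted-shift transformation `Λ_T` on families of complex numbers. -/
def lamMap (T : DirectedTree V) (lam : V → ℂ) (f : V → ℂ) : V → ℂ :=
  fun v => if T.nonRoot v then lam v * f (T.par v) else 0

variable (T : DirectedTree V)

theorem lamMap_add (lam : V → ℂ) (f g : V → ℂ) :
    T.lamMap lam (f + g) = T.lamMap lam f + T.lamMap lam g := by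
  funext v; simp only [lamMap, Pi.add_apply]; split <;> ring

theorem lamMap_smul (lam : V → ℂ) (c : ℂ) (f : V → ℂ) :
    T.lamMap lam (c • f) = c • T.lamMap lam f := by
  funext v; simp only [lamMap, Pi.smul_apply, smul_eq_mul]; split <;> ring

theorem lamMap_zero (lam : V → ℂ) : T.lamMap lam (0 : V → ℂ) = 0 := by
  funext v; simp [lamMap]

/-- The domain of the weighted shift `S_λ`. -/
def shiftDomain (lam : V → ℂ) : Submodule ℂ (lp (fun _ : V => ℂ) 2) where
  carrier := {f | Memℓp (T.lamMap lam f) 2}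
  zero_mem' := by
    rw [Set.mem_setOf_eq, lp.coeFn_zero, lamMap_zero]
    exact zero_memℓp
  add_mem' := by
    intro f g hf hg
    rw [Set.mem_setOf_eq, lp.coeFn_add, lamMap_add]
    exact hf.add hg
  smul_mem' := by
    intro c f hf
    rw [Set.mem_setOf_eq, lp.coeFn_smul, lamMap_smul]
    exact hf.const_smul c

/-- The weighted shift `S_λ` on the directed tree `T`, as a partial operator in `ℓ²(V)`. -/
def shift (lam : V → ℂ) : lp (fun _ : V => ℂ) 2 →ₗ.[ℂ] lp (fun _ : V => ℂ) 2 where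
  domain := T.shiftDomain lam
  toFun :=
    { toFun := fun f => (⟨T.lamMap lam f, f.2⟩ : lp (fun _ : V => ℂ) 2)
      map_add' := by
        rintro f g
        apply lp.ext
        rw [lp.coeFn_add]
        show T.lamMap lam
            ((((f : lp (fun _ : V => ℂ) 2) : V → ℂ)) + (((g : lp (fun _ : V => ℂ) 2) : V → ℂ)))
          = T.lamMap lam ((f : lp (fun _ : V => ℂ) 2) : V → ℂ)
            + T.lamMap lam ((g : lp (fun _ : V => ℂ) 2) : V → ℂ)
        exact T.lamMap_add lam _ _
      map_smul' := by
        rintro c f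
        apply lp.ext
        rw [lp.coeFn_smul]
        show T.lamMap lam (c • (((f : lp (fun _ : V => ℂ) 2) : V → ℂ)))
          = c • T.lamMap lam ((f : lp (fun _ : V => ℂ) 2) : V → ℂ)
        exact T.lamMap_smul lam c _ }

end DirectedTree

open Classical in
/-- The basis vector `e_u` of `ℓ²(V)`. -/
def eVec {V : Type*} (u : V) : lp (fun _ : V => ℂ) 2 := lp.single 2 u 1

section MoreDefs
universe u
variable {H : Type u} [NormedAddCommGroup H] [InnerProductSpace ℂ H]

/-- The inner product, linear in the FIRST argument (the paper's convention). -/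
def innerPaper (x y : H) : ℂ := inner ℂ y x

/-- The moment sequence `n ↦ ‖Sⁿ f‖²` generated by the vector `f`. -/
def momentSeq (S : H →ₗ.[ℂ] H) (f : H) : ℕ → ℝ := fun n => ‖powApp S n f‖ ^ 2

/-- `f` is a quasi-analytic vector of `S` : `f ∈ D^∞(S)` and
`∑ₙ ‖Sⁿ f‖^{-1/n} = ∞` (with `1/0 = ∞`). -/
def IsQuasiAnalyticVec (S : H →ₗ.[ℂ] H) (f : H) : Prop :=
  (∀ n : ℕ, f ∈ (pmapPow S n).domain) ∧
  ∑' n : ℕ, ((‖powApp S (n + 1) f‖₊ ^ ((1 : ℝ) / (n + 1)) : ℝ≥0) : ℝ≥0∞)⁻¹ = ∞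

end MoreDefs

/-- The consistency condition `μ_u(σ) = ∑_{v ∈ Chi(u)} |λ_v|² ∫_σ (1/s) dμ_v(s) + ε_u δ₀(σ)`
at the vertex `u` (with the convention `1/0 = ∞`). -/
def consistentAt {V : Type*} (T : DirectedTree V) (lam : V → ℂ) (μ : V → MeasureTheory.Measure ℝ≥0)
    (ε : V → ℝ≥0) (u : V) : Prop :=
  ∀ σ : Set ℝ≥0, MeasurableSet σ →
    μ u σ = (∑' v : {v : V // T.edge u v},
        (‖lam (v : V)‖₊ : ℝ≥0∞) ^ 2 * ∫⁻ s in σ, ((s : ℝ≥0∞))⁻¹ ∂(μ (v : V)))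
      + (ε u : ℝ≥0∞) * MeasureTheory.Measure.dirac (0 : ℝ≥0) σ

/-- The sequence `{ϑ, t₀, t₁, t₂, …}` obtained by prepending `ϑ` to `t`. -/
def shiftedSeq (ϑ : ℝ) (t : ℕ → ℝ) : ℕ → ℝ := fun n => match n with
  | 0 => ϑ
  | n + 1 => t n

/-- A positive definite sequence of real numbers. -/
def IsPosDefSeq (t : ℕ → ℝ) : Prop :=
  ∀ (n : ℕ) (α : ℕ → ℂ),
    0 ≤ (∑ k ∈ Finset.range (n + 1), ∑ l ∈ Finset.range (n + 1),
        (t (k + l) : ℂ) * α k * (starRingEnd ℂ) (α l)).re ∧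
    (∑ k ∈ Finset.range (n + 1), ∑ l ∈ Finset.range (n + 1),
        (t (k + l) : ℂ) * α k * (starRingEnd ℂ) (α l)).im = 0

section PartialPowers

variable {H : Type*} [NormedAddCommGroup H] [InnerProductSpace ℂ H] {S : H →ₗ.[ℂ] H}

theorem mem_pmapPow_succ {n : ℕ} {x : H} :
    x ∈ (pmapPow S (n + 1)).domain ↔ ∃ hx : x ∈ S.domain, S ⟨x, hx⟩ ∈ (pmapPow S n).domain :=
  ⟨fun h => (Submodule.mem_inf.mp h).1, fun h => Submodule.mem_inf.mpr ⟨h, h.fst⟩⟩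

theorem pmapPow_succ_apply {n : ℕ} {x : H} (hx : x ∈ (pmapPow S (n + 1)).domain) :
    pmapPow S (n + 1) ⟨x, hx⟩
      = pmapPow S n ⟨S ⟨x, (mem_pmapPow_succ.mp hx).fst⟩, (mem_pmapPow_succ.mp hx).snd⟩ :=
  rfl

theorem span_subset_Dinf_iff {s : Set H} : (Submodule.span ℂ s : Set H) ⊆ Dinf S ↔ s ⊆ Dinf S :=
  ⟨Submodule.subset_span.trans, fun h _ hx n =>
    Submodule.span_le.mpr (fun _ hy => h hy n) hx⟩

end PartialPowers

section SquareSummable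

variable {ι : Type*} {E : ι → Type*} [∀ i, NormedAddCommGroup (E i)]

theorem memℓp_two_iff_tsum_nnnorm_sq_ne_top {f : ∀ i, E i} :
    Memℓp f 2 ↔ ∑' i, (‖f i‖₊ : ℝ≥0∞) ^ 2 ≠ ⊤ := by
  simp_rw [memℓp_gen_iff (by norm_num : 0 < (2 : ℝ≥0∞).toReal), ← ENNReal.coe_pow,
    ENNReal.tsum_coe_ne_top_iff_summable, ← NNReal.summable_coe]
  norm_num

theorem lp.nnnorm_sq_eq_tsum (f : lp E 2) :
    (‖f‖₊ : ℝ≥0∞) ^ 2 = ∑' i, (‖f i‖₊ : ℝ≥0∞) ^ 2 := by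
  have hs : Summable fun i => ‖f i‖₊ ^ 2 := by
    rw [← ENNReal.tsum_coe_ne_top_iff_summable]
    simpa only [ENNReal.coe_pow] using memℓp_two_iff_tsum_nnnorm_sq_ne_top.mp f.2
  have h : ‖f‖₊ ^ 2 = ∑' i, ‖f i‖₊ ^ 2 := NNReal.eq <| by
    simpa [NNReal.coe_tsum] using lp.norm_rpow_eq_tsum (p := 2) (by norm_num) f
  simp only [← ENNReal.coe_pow, h, ENNReal.coe_tsum hs]

end SquareSummable

theorem eq_dirac_zero_of_lintegral_pow_eq_zero {ν : Measure ℝ≥0} [IsProbabilityMeasure ν] {n : ℕ}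
    (hn : n ≠ 0) (h : ∫⁻ s, (s : ℝ≥0∞) ^ n ∂ν = 0) : ν = Measure.dirac 0 := by
  have hae : ∀ᵐ s ∂ν, s ∈ ({0} : Set ℝ≥0) := by
    filter_upwards [(lintegral_eq_zero_iff (by fun_prop)).mp h] with s hs
    simpa [hn] using hs
  have hν : ν {0} = 1 := (prob_compl_eq_zero_iff (measurableSet_singleton 0)).mp (ae_iff.mp hae)
  rw [← Measure.restrict_eq_self_of_ae_mem hae, Measure.restrict_singleton, hν, one_smul]

namespace DirectedTree

variable {V : Type*} (T : DirectedTree V)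

theorem par_eq_of_edge {u v : V} (h : T.edge u v) : T.par v = u := by
  have hv : ∃ w, T.edge w v := ⟨u, h⟩
  rw [par, dif_pos hv]
  exact T.parent_unique v _ _ hv.choose_spec h

theorem edge_par_of_nonRoot {v : V} (h : T.nonRoot v) : T.edge (T.par v) v := by
  obtain ⟨u, hu⟩ := h
  rwa [T.par_eq_of_edge hu]

theorem mem_chiN_succ {n : ℕ} {u v : V} : v ∈ T.chiN (n + 1) u ↔ ∃ w ∈ T.chiN n u, T.edge w v := by
  simp [chiN, chi]

theorem chiN_add (m k : ℕ) (u : V) : T.chiN (m + k) u = ⋃ v ∈ T.chiN m u, T.chiN k v := by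
  induction k with
  | zero => simp [chiN]
  | succ k ih =>
    rw [← add_assoc]
    ext v
    simp only [chiN, ih, Set.mem_iUnion]
    grind

theorem mem_chiN_succ' {n : ℕ} {u v : V} :
    v ∈ T.chiN (n + 1) u ↔ ∃ w, T.edge u w ∧ v ∈ T.chiN n w := by
  rw [add_comm, chiN_add]
  simp [chiN, chi]

theorem iterate_par_of_mem_chiN {n : ℕ} {u v : V} (hv : v ∈ T.chiN n u) : T.par^[n] v = u := by
  induction n generalizing v with
  | zero => exact hv
  | succ n ih =>
    obtain ⟨w, hw, hwv⟩ := T.mem_chiN_succ.mp hv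
    rw [Function.iterate_succ_apply, T.par_eq_of_edge hwv, ih hw]

theorem chiN_eq_empty_of_mem_des {n : ℕ} {u v : V} (hu : T.chiN n u = ∅) (hv : v ∈ T.des u) :
    T.chiN n v = ∅ := by
  obtain ⟨m, hm⟩ := Set.mem_iUnion.mp hv
  have : T.chiN (n + m) u = ∅ := by simp [chiN_add, hu]
  rw [add_comm, chiN_add] at this
  exact Set.subset_empty_iff.mp (this ▸ Set.subset_biUnion_of_mem hm)

variable (lam : V → ℂ)

theorem pathProd_succ (n : ℕ) (v : V) :
    T.pathProd lam (n + 1) v = T.pathProd lam n v * lam (T.par^[n] v) :=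
  Finset.prod_range_succ _ _

theorem pathProd_succ' (n : ℕ) (v : V) :
    T.pathProd lam (n + 1) v = T.pathProd lam n (T.par v) * lam v := by
  simp only [pathProd, Finset.prod_range_succ', Function.iterate_succ_apply,
    Function.iterate_zero_apply]

theorem lamMap_indicator_pathProd (n : ℕ) (u : V) :
    T.lamMap lam ((T.chiN n u).indicator (T.pathProd lam n))
      = (T.chiN (n + 1) u).indicator (T.pathProd lam (n + 1)) := by
  funext v
  by_cases hv : T.nonRoot v
  · have hpar : T.par v ∈ T.chiN n u ↔ v ∈ T.chiN (n + 1) u :=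
      ⟨fun h => T.mem_chiN_succ.mpr ⟨_, h, T.edge_par_of_nonRoot hv⟩, fun h => by
        obtain ⟨w, hw, hwv⟩ := T.mem_chiN_succ.mp h
        rwa [T.par_eq_of_edge hwv]⟩
    by_cases h : v ∈ T.chiN (n + 1) u
    · simp [lamMap, hv, h, hpar.mpr h, pathProd_succ', mul_comm]
    · simp [lamMap, hv, h, mt hpar.mp h]
  · have h : v ∉ T.chiN (n + 1) u := fun h => hv (by
      obtain ⟨w, -, hwv⟩ := T.mem_chiN_succ.mp h
      exact ⟨w, hwv⟩)
    simp [lamMap, hv, h]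

theorem iterate_lamMap_eVec (n : ℕ) (u : V) :
    (T.lamMap lam)^[n] (eVec u : V → ℂ) = (T.chiN n u).indicator (T.pathProd lam n) := by
  induction n with
  | zero =>
    funext v
    by_cases h : v = u
    · subst h; simp [eVec, chiN, pathProd]
    · simp [eVec, chiN, h]
  | succ n ih => rw [Function.iterate_succ_apply', ih, lamMap_indicator_pathProd]

theorem mem_shift_domain_iff (f : lp (fun _ : V => ℂ) 2) :
    f ∈ (T.shift lam).domain ↔ Memℓp (T.lamMap lam f) 2 :=
  Iff.rfl

theorem coe_shift_apply (f : lp (fun _ : V => ℂ) 2) (hf : f ∈ (T.shift lam).domain) :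
    (T.shift lam ⟨f, hf⟩ : V → ℂ) = T.lamMap lam f :=
  rfl

theorem mem_pmapPow_shift_domain_iff (n : ℕ) (f : lp (fun _ : V => ℂ) 2) :
    f ∈ (pmapPow (T.shift lam) n).domain ↔ ∀ k < n, Memℓp ((T.lamMap lam)^[k + 1] f) 2 := by
  induction n generalizing f with
  | zero => simp [pmapPow]
  | succ n ih =>
    simp only [mem_pmapPow_succ, Nat.forall_lt_succ_left', ih, coe_shift_apply,
      mem_shift_domain_iff, Function.iterate_succ_apply, Function.iterate_zero_apply]
    exact exists_prop

theorem coe_pmapPow_shift_apply (n : ℕ) (f : lp (fun _ : V => ℂ) 2)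
    (hf : f ∈ (pmapPow (T.shift lam) n).domain) :
    (pmapPow (T.shift lam) n ⟨f, hf⟩ : V → ℂ) = (T.lamMap lam)^[n] f := by
  induction n generalizing f with
  | zero => rfl
  | succ n ih => rw [pmapPow_succ_apply, ih]; rfl

theorem mem_Dinf_shift_iff (f : lp (fun _ : V => ℂ) 2) :
    f ∈ Dinf (T.shift lam) ↔ ∀ n, Memℓp ((T.lamMap lam)^[n] f) 2 := by
  simp only [Dinf, Set.mem_ofPred_eq, mem_pmapPow_shift_domain_iff]
  refine ⟨fun h n => ?_, fun h n k _ => h (k + 1)⟩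
  cases n with
  | zero => exact f.2
  | succ n => exact h (n + 1) n n.lt_succ_self

def pathSum (n : ℕ) (u : V) : ℝ≥0∞ := ∑' v : T.chiN n u, (‖T.pathProd lam n v‖₊ : ℝ≥0∞) ^ 2

theorem pathSum_eq_tsum_indicator (n : ℕ) (u : V) :
    T.pathSum lam n u
      = ∑' v, (T.chiN n u).indicator (fun v => (‖T.pathProd lam n v‖₊ : ℝ≥0∞) ^ 2) v :=
  tsum_subtype (T.chiN n u) fun v => (‖T.pathProd lam n v‖₊ : ℝ≥0∞) ^ 2

theorem tsum_nnnorm_sq_indicator_pathProd (n : ℕ) (u : V) :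
    ∑' v, (‖(T.chiN n u).indicator (T.pathProd lam n) v‖₊ : ℝ≥0∞) ^ 2 = T.pathSum lam n u := by
  rw [pathSum_eq_tsum_indicator]
  congr with v
  by_cases h : v ∈ T.chiN n u <;> simp [h]

theorem pathSum_zero (u : V) : T.pathSum lam 0 u = 1 := by
  simp [pathSum, chiN, pathProd]

theorem indicator_pathProd_succ_sq (n : ℕ) (u v : V) :
    (T.chiN (n + 1) u).indicator (fun v => (‖T.pathProd lam (n + 1) v‖₊ : ℝ≥0∞) ^ 2) v
      = ∑' w : {w // T.edge u w}, (‖lam w‖₊ : ℝ≥0∞) ^ 2 *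
          (T.chiN n w).indicator (fun v => (‖T.pathProd lam n v‖₊ : ℝ≥0∞) ^ 2) v := by
  by_cases h : v ∈ T.chiN (n + 1) u
  · obtain ⟨w₀, hw₀, hv₀⟩ := T.mem_chiN_succ'.mp h
    rw [Set.indicator_of_mem h, tsum_eq_single ⟨w₀, hw₀⟩]
    · simp [hv₀, pathProd_succ, T.iterate_par_of_mem_chiN hv₀, mul_pow, mul_comm]
    · rintro ⟨w, hw⟩ hne
      have : v ∉ T.chiN n w := fun hv => hne <| Subtype.ext <|
        (T.iterate_par_of_mem_chiN hv).symm.trans (T.iterate_par_of_mem_chiN hv₀)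
      simp [this]
  · rw [Set.indicator_of_notMem h, eq_comm, ENNReal.tsum_eq_zero]
    rintro ⟨w, hw⟩
    have : v ∉ T.chiN n w := fun hv => h (T.mem_chiN_succ'.mpr ⟨w, hw, hv⟩)
    simp [this]

theorem pathSum_succ (n : ℕ) (u : V) :
    T.pathSum lam (n + 1) u
      = ∑' w : {w // T.edge u w}, (‖lam w‖₊ : ℝ≥0∞) ^ 2 * T.pathSum lam n w := by
  simp only [pathSum_eq_tsum_indicator, indicator_pathProd_succ_sq, ← ENNReal.tsum_mul_left]
  exact ENNReal.tsum_comm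

variable {T lam} {μ : V → Measure ℝ≥0} {ε : V → ℝ≥0} {u : V}

theorem measure_eq_of_consistentAt (h : consistentAt T lam μ ε u) :
    μ u = Measure.sum (fun w : {w // T.edge u w} =>
        (‖lam w‖₊ : ℝ≥0∞) ^ 2 • (μ w).withDensity fun s => (s : ℝ≥0∞)⁻¹)
      + (ε u : ℝ≥0∞) • Measure.dirac 0 := by
  ext σ hσ
  simp only [h σ hσ, Measure.add_apply, Measure.sum_apply _ hσ, Measure.smul_apply, smul_eq_mul,
    withDensity_apply _ hσ]

theorem lintegral_eq_of_consistentAt (h : consistentAt T lam μ ε u) {f : ℝ≥0 → ℝ≥0∞}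
    (hf : Measurable f) :
    ∫⁻ s, f s ∂μ u
      = ∑' w : {w // T.edge u w}, (‖lam w‖₊ : ℝ≥0∞) ^ 2 * ∫⁻ s, (s : ℝ≥0∞)⁻¹ * f s ∂μ w
        + ε u * f 0 := by
  rw [measure_eq_of_consistentAt h, lintegral_add_measure, lintegral_sum_measure,
    lintegral_smul_measure, lintegral_dirac]
  congr 1
  refine tsum_congr fun w => ?_
  rw [lintegral_smul_measure, lintegral_withDensity_eq_lintegral_mul _ (by fun_prop) hf]
  rfl

theorem measure_zero_eq_zero_of_consistentAt (h : consistentAt T lam μ ε u) (hu : μ u {0} ≠ ∞)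
    {w : V} (hw : T.edge u w) (hl : lam w ≠ 0) : μ w {0} = 0 := by
  contrapose! hu
  rw [h _ (measurableSet_singleton 0)]
  refine top_unique (le_add_right (le_trans ?_ (ENNReal.le_tsum ⟨w, hw⟩)))
  simp [hl, hu]

theorem lintegral_pow_succ_of_consistentAt (h : consistentAt T lam μ ε u) (hu : μ u {0} ≠ ∞)
    (n : ℕ) :
    ∫⁻ s, (s : ℝ≥0∞) ^ (n + 1) ∂μ u
      = ∑' w : {w // T.edge u w}, (‖lam w‖₊ : ℝ≥0∞) ^ 2 * ∫⁻ s, (s : ℝ≥0∞) ^ n ∂μ w := by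
  rw [lintegral_eq_of_consistentAt h (by fun_prop)]
  simp only [ENNReal.coe_zero, zero_pow n.succ_ne_zero, mul_zero, add_zero]
  refine tsum_congr fun ⟨w, hw⟩ => ?_
  by_cases hl : lam w = 0
  · simp [hl]
  congr 1
  refine lintegral_congr_ae ?_
  filter_upwards [measure_eq_zero_iff_ae_notMem.mp
    (measure_zero_eq_zero_of_consistentAt h hu hw hl)] with s hs
  rw [pow_succ', ← mul_assoc, ENNReal.inv_mul_cancel (by simpa using hs) ENNReal.coe_ne_top,
    one_mul]

theorem lintegral_pow_eq_pathSum (hprob : ∀ v, IsProbabilityMeasure (μ v))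
    (hcons : ∀ u, consistentAt T lam μ ε u) (n : ℕ) (u : V) :
    ∫⁻ s, (s : ℝ≥0∞) ^ n ∂μ u = T.pathSum lam n u := by
  induction n generalizing u with
  | zero => simp [pathSum_zero]
  | succ n ih =>
    rw [lintegral_pow_succ_of_consistentAt (hcons u) (measure_ne_top (μ u) _), pathSum_succ]
    simp only [ih]

end DirectedTree

/-- moments of the measures of a consistent system and membership of the
basis vectors in `D^∞(S_λ)`. -/
theorem stmt13 {V : Type*} (T : DirectedTree V) (lam : V → ℂ)
    (ε : V → ℝ≥0) (μ : V → Measure ℝ≥0)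
    (hprob : ∀ v : V, IsProbabilityMeasure (μ v))
    (hcons : ∀ u : V, consistentAt T lam μ ε u) :
    (∀ (u : V) (n : ℕ), 1 ≤ n →
      (∫⁻ s, ((s : ℝ≥0∞)) ^ n ∂(μ u))
        = ∑' v : (T.chiN n u), (‖T.pathProd lam n (v : V)‖₊ : ℝ≥0∞) ^ 2)
    ∧ (∀ (u : V) (n : ℕ), 1 ≤ n → T.chiN n u = ∅ →
        ∀ v ∈ T.des u, μ v = Measure.dirac (0 : ℝ≥0))
    ∧ ((Submodule.span ℂ (Set.range (eVec (V := V))) : Set (lp (fun _ : V => ℂ) 2)) ⊆ Dinf (T.shift lam) ↔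
        ∀ (n : ℕ) (u : V), (∫⁻ s, ((s : ℝ≥0∞)) ^ n ∂(μ u)) ≠ ⊤)
    ∧ ((Submodule.span ℂ (Set.range (eVec (V := V))) : Set (lp (fun _ : V => ℂ) 2)) ⊆ Dinf (T.shift lam) →
        ∀ (u : V) (n : ℕ),
          ((‖powApp (T.shift lam) n (eVec u)‖₊ : ℝ≥0∞)) ^ 2
            = ∫⁻ s, ((s : ℝ≥0∞)) ^ n ∂(μ u)) := by
  have hmoment := DirectedTree.lintegral_pow_eq_pathSum hprob hcons
  have hnorm (n : ℕ) (u : V) : ∑' v, (‖(T.lamMap lam)^[n] (eVec u : V → ℂ) v‖₊ : ℝ≥0∞) ^ 2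
      = ∫⁻ s, (s : ℝ≥0∞) ^ n ∂μ u := by
    rw [T.iterate_lamMap_eVec, T.tsum_nnnorm_sq_indicator_pathProd, hmoment]
  have hDinf (u : V) : eVec u ∈ Dinf (T.shift lam) ↔ ∀ n, ∫⁻ s, (s : ℝ≥0∞) ^ n ∂μ u ≠ ⊤ := by
    simp only [DirectedTree.mem_Dinf_shift_iff, memℓp_two_iff_tsum_nnnorm_sq_ne_top, hnorm]
  refine ⟨fun u n _ => hmoment n u, fun u n hn hu v hv => ?_, ?_, fun hsub u n => ?_⟩
  · have := hprob v
    refine eq_dirac_zero_of_lintegral_pow_eq_zero (n := n) (by omega) ?_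
    simp [hmoment, DirectedTree.pathSum, T.chiN_eq_empty_of_mem_des hu hv]
  · rw [span_subset_Dinf_iff, Set.range_subset_iff, forall_comm]
    exact forall_congr' hDinf
  · have hu : eVec u ∈ Dinf (T.shift lam) := span_subset_Dinf_iff.mp hsub ⟨u, rfl⟩
    rw [powApp, dif_pos (hu n), lp.nnnorm_sq_eq_tsum, T.coe_pmapPow_shift_apply, hnorm]

end
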